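/- arXiv:2503.14889 — 3 statements merged into one kernel-verified Lean document; each statement's English description precedes it below -/
import Mathlib

section
/- Let d ≥ 1 be an integer and p > 1. Suppose q : (0,∞) → (0,∞) is twice continuously differentiable, solves the ODE q''(r) + ((d−1)/r) q'(r) − q(r) + q(r)^p = 0 for all r > 0, and satisfies q(r) → 0 as r → ∞. Then there exist constants c_q > 0 and C > 0 such that for all r ≥ 1: |q(r) − c_q r^{−(d−1)/2} e^{−r}| + |q'(r) + c_q r^{−(d−1)/2} e^{−r}| ≤ C r^{−(d+1)/2} e^{−r}. -/
/-!
Write `ν = (d - 1) / 2` and `w = r ^ ν q`. The ODE becomes the perturbed oscillator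
`w'' = (1 + ε) w` with `ε = ν (ν - 1) / r ^ 2 - q ^ (p - 1) → 0`. Monotone energies
`w' ^ 2 - k w ^ 2` show that a solution with `w e^{-r/2} → 0` satisfies
`-3w/2 ≤ w' ≤ -w/2` eventually, so `w = O(e^{-r/2})`, which upgrades the smallness of `ε` to
`|ε| ≤ K / r ^ 2`. The quantity `z = 1 + w'/w` solves the Riccati equation
`z' = ε + (2 - z) z`, whose instability at `z = 0` forces `|z| ≤ K / r ^ 2`. Hence
`log w + r` converges at rate `K / r`, i.e. `w = c e^{-r} (1 + O(1/r))` and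
`w' = -c e^{-r} (1 + O(1/r))`; undoing the substitution gives the bounds for large `r`, and
compactness covers the remaining range.
-/

open Filter Topology Set Real

section HalfLine

variable {f f' : ℝ → ℝ} {a : ℝ}

theorem monotoneOn_Ici_of_hasDerivAt_nonneg (hf : ∀ r ≥ a, HasDerivAt f (f' r) r)
    (hf' : ∀ r ≥ a, 0 ≤ f' r) : MonotoneOn f (Ici a) :=
  monotoneOn_of_hasDerivWithinAt_nonneg (convex_Ici a)
    (fun r hr => (hf r hr).continuousAt.continuousWithinAt)
    (fun r hr => (hf r (interior_subset hr)).hasDerivWithinAt)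
    (fun r hr => hf' r (interior_subset hr))

theorem antitoneOn_Ici_of_hasDerivAt_nonpos (hf : ∀ r ≥ a, HasDerivAt f (f' r) r)
    (hf' : ∀ r ≥ a, f' r ≤ 0) : AntitoneOn f (Ici a) := by
  simpa using (monotoneOn_Ici_of_hasDerivAt_nonneg (fun r hr => (hf r hr).neg)
    (fun r hr => neg_nonneg.2 (hf' r hr))).neg

theorem add_mul_sub_le_of_le_hasDerivAt {c : ℝ} (hf : ∀ r ≥ a, HasDerivAt f (f' r) r)
    (hc : ∀ r ≥ a, c ≤ f' r) : ∀ r ≥ a, f a + c * (r - a) ≤ f r := by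
  have hmono := monotoneOn_Ici_of_hasDerivAt_nonneg (f := fun r => f r - c * r)
    (fun r hr => ((hf r hr).sub ((hasDerivAt_id r).const_mul c)).congr_deriv (by simp))
    (fun r hr => sub_nonneg.2 (hc r hr))
  intro r hr
  have := hmono self_mem_Ici hr hr
  simp only at this
  linarith

theorem mul_exp_le_of_mul_le_hasDerivAt {c : ℝ} (hf : ∀ r ≥ a, HasDerivAt f (f' r) r)
    (hc : ∀ r ≥ a, c * f r ≤ f' r) : ∀ r ≥ a, f a * exp (c * (r - a)) ≤ f r := by
  have hmono := monotoneOn_Ici_of_hasDerivAt_nonneg (f := fun r => f r * exp (-(c * r)))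
    (fun r hr => ((hf r hr).mul ((hasDerivAt_id r).const_mul c).neg.exp).congr_deriv
      (show _ = (f' r - c * f r) * exp (-(c * r)) by simp; ring))
    (fun r hr => mul_nonneg (sub_nonneg.2 (hc r hr)) (exp_pos _).le)
  intro r hr
  have := mul_le_mul_of_nonneg_right (hmono self_mem_Ici hr hr) (exp_pos (c * r)).le
  simp only [mul_assoc, ← exp_add, neg_add_cancel, exp_zero, mul_one] at this
  rwa [show c * (r - a) = -(c * a) + c * r by ring]

theorem le_mul_exp_of_hasDerivAt_le_mul {c : ℝ} (hf : ∀ r ≥ a, HasDerivAt f (f' r) r)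
    (hc : ∀ r ≥ a, f' r ≤ c * f r) : ∀ r ≥ a, f r ≤ f a * exp (c * (r - a)) := by
  intro r hr
  have := mul_exp_le_of_mul_le_hasDerivAt (f := fun r => -f r) (fun r hr => (hf r hr).neg)
    (fun r hr => by simpa using hc r hr) r hr
  linarith

theorem pos_of_hasDerivAt_pos_of_pos (hf : ∀ r ≥ a, HasDerivAt f (f' r) r) (ha : 0 < f a)
    (hf' : ∀ r ≥ a, 0 < f r → 0 < f' r) : ∀ r ≥ a, 0 < f r := by
  by_contra! ⟨t, hat, ht⟩
  set Z := Icc a t ∩ f ⁻¹' Iic 0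
  have hZ : IsClosed Z := ContinuousOn.preimage_isClosed_of_isClosed
    (fun r hr => (hf r hr.1).continuousAt.continuousWithinAt) isClosed_Icc isClosed_Iic
  have hZne : Z.Nonempty := ⟨t, ⟨hat, le_rfl⟩, ht⟩
  have hT : sInf Z ∈ Z := hZ.csInf_mem hZne ⟨a, fun r (hr : r ∈ Z) => hr.1.1⟩
  have haT : a < sInf Z := lt_of_le_of_ne hT.1.1 fun h => (h ▸ hT.2 : f a ≤ 0).not_gt ha
  have hbefore : ∀ r ∈ Ico a (sInf Z), 0 < f r := fun r hr => by
    by_contra! h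
    exact (csInf_le ⟨a, fun s (hs : s ∈ Z) => hs.1.1⟩ ⟨⟨hr.1, hr.2.le.trans hT.1.2⟩, h⟩).not_gt hr.2
  have hmono : StrictMonoOn f (Icc a (sInf Z)) := strictMonoOn_of_hasDerivWithinAt_pos
    (convex_Icc _ _) (fun r hr => (hf r hr.1).continuousAt.continuousWithinAt)
    (fun r hr => by
      rw [interior_Icc] at hr
      exact (hf r hr.1.le).hasDerivWithinAt)
    (fun r hr => by
      rw [interior_Icc] at hr
      exact hf' r hr.1.le (hbefore r ⟨hr.1.le, hr.2⟩))
  have := hmono (left_mem_Icc.2 haT.le) (right_mem_Icc.2 haT.le) haT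
  exact (ha.trans this).not_ge hT.2

theorem eventually_pos_of_le_hasDerivAt {c : ℝ} (hc : 0 < c)
    (hf : ∀ r ≥ a, HasDerivAt f (f' r) r) (hcf : ∀ r ≥ a, c ≤ f' r) :
    ∀ᶠ r in atTop, 0 < f r := by
  have hlin : Tendsto (fun r => f a + c * (r - a)) atTop atTop :=
    tendsto_atTop_add_const_left _ _
      ((tendsto_id.atTop_add tendsto_const_nhds).const_mul_atTop hc)
  filter_upwards [hlin.eventually_gt_atTop 0, eventually_ge_atTop a] with r h hr
  exact h.trans_le (add_mul_sub_le_of_le_hasDerivAt hf hcf r hr)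

theorem exists_abs_sub_le_div_of_abs_hasDerivAt_le {K : ℝ} (ha : 0 < a)
    (hf : ∀ r ≥ a, HasDerivAt f (f' r) r) (hf' : ∀ r ≥ a, |f' r| ≤ K / r ^ 2) :
    ∃ l, ∀ r ≥ a, |f r - l| ≤ K / r := by
  have hpos (r : ℝ) (hr : r ≥ a) : 0 < r := ha.trans_le hr
  have hK : 0 ≤ K := by
    simpa using (le_div_iff₀ (by positivity)).1 ((abs_nonneg _).trans (hf' a le_rfl))
  have hdiv (r : ℝ) (hr : r ≥ a) : HasDerivAt (fun s => K / s) (-(K / r ^ 2)) r :=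
    ((hasDerivAt_const r K).div (hasDerivAt_id r) (hpos r hr).ne').congr_deriv (by simp [neg_div])
  have hanti : AntitoneOn (fun r => f r + K / r) (Ici a) :=
    antitoneOn_Ici_of_hasDerivAt_nonpos (fun r hr => (hf r hr).add (hdiv r hr))
      (fun r hr => by linarith [(abs_le.1 (hf' r hr)).2])
  have hmono : MonotoneOn (fun r => f r - K / r) (Ici a) :=
    monotoneOn_Ici_of_hasDerivAt_nonneg (fun r hr => (hf r hr).sub (hdiv r hr))
      (fun r hr => by linarith [(abs_le.1 (hf' r hr)).1])
  have hlower_le_upper : ∀ s ≥ a, ∀ r ≥ a, f s - K / s ≤ f r + K / r := by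
    intro s hs r hr
    have := div_nonneg hK (hpos r hr).le
    have := div_nonneg hK (hpos s hs).le
    rcases le_total s r with h | h
    · linarith [hmono hs hr h]
    · linarith [hanti hr hs h]
  have hbdd : BddAbove ((fun r => f r - K / r) '' Ici a) :=
    ⟨f a + K / a, by rintro _ ⟨s, hs, rfl⟩; exact hlower_le_upper s hs a le_rfl⟩
  refine ⟨sSup ((fun r => f r - K / r) '' Ici a), fun r hr => abs_le.2 ⟨?_, ?_⟩⟩
  · have := csSup_le ((nonempty_Ici).image _)
      (by rintro _ ⟨s, hs, rfl⟩; exact hlower_le_upper s hs r hr)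
    linarith
  · linarith [le_csSup hbdd ⟨r, hr, rfl⟩]

end HalfLine

theorem hasDerivAt_div_sq (K : ℝ) {r : ℝ} (hr : r ≠ 0) :
    HasDerivAt (fun s => K / s ^ 2) (-(2 * K / r ^ 3)) r := by
  refine ((hasDerivAt_const r K).div (hasDerivAt_pow 2 r) (pow_ne_zero 2 hr)).congr_deriv ?_
  field_simp
  ring

theorem le_div_sq_of_hasDerivAt_riccati {y e c : ℝ → ℝ} {a K B : ℝ} (ha : 0 < a) (hK : 0 < K)
    (hy : ∀ r ≥ a, HasDerivAt y (e r + c r * y r) r) (hc : ∀ r ≥ a, 3 / 2 ≤ c r)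
    (hB : ∀ r ≥ a, y r ≤ B) (he : ∀ r ≥ a, |e r| ≤ K / r ^ 2) : ∀ r ≥ a, y r ≤ K / r ^ 2 := by
  intro r₁ hr₁
  by_contra! h₁
  have hle (r : ℝ) (hr : r ≥ r₁) : r ≥ a := hr₁.trans hr
  have hpos (r : ℝ) (hr : r ≥ r₁) : 0 < r := ha.trans_le (hle r hr)
  have hcy (r : ℝ) (hr : r ≥ r₁) (hy : 0 ≤ y r) : 3 / 2 * y r ≤ c r * y r :=
    mul_le_mul_of_nonneg_right (hc r (hle r hr)) hy
  have hKr (r : ℝ) (hr : r ≥ r₁) : 0 < K / r ^ 2 := by have := hpos r hr; positivity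
  -- the moving barrier `K / r ^ 2` is never crossed from above
  have habove : ∀ r ≥ r₁, 0 < y r - K / r ^ 2 := by
    refine pos_of_hasDerivAt_pos_of_pos (f' := fun r => e r + c r * y r + 2 * K / r ^ 3)
      (fun r hr => ((hy r (hle r hr)).sub (hasDerivAt_div_sq K (hpos r hr).ne')).congr_deriv
        (by ring)) (by linarith) (fun r hr hgap => ?_)
    have := (abs_le.1 (he r (hle r hr))).1
    have := hcy r hr (by linarith [hKr r hr])
    have : 0 < 2 * K / r ^ 3 := by have := hpos r hr; positivity
    linarith [hKr r hr]
  have hgrowth := mul_exp_le_of_mul_le_hasDerivAt (c := 1 / 2) (fun r hr => hy r (hle r hr))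
    (fun r hr => by
      have := (abs_le.1 (he r (hle r hr))).1
      have := habove r hr
      have := hcy r hr (by linarith [hKr r hr])
      linarith)
  have hunbdd : Tendsto (fun r => y r₁ * exp (1 / 2 * (r - r₁))) atTop atTop :=
    (tendsto_exp_atTop.comp ((tendsto_id.atTop_add tendsto_const_nhds).const_mul_atTop
      one_half_pos)).const_mul_atTop (by linarith [hKr r₁ le_rfl])
  obtain ⟨r, hrB, hr⟩ := ((hunbdd.eventually_gt_atTop B).and (eventually_ge_atTop r₁)).exists
  linarith [hgrowth r hr, hB r (hle r hr)]

theorem exists_le_mul_of_le_mul_on_Ici {F G : ℝ → ℝ} {a b C₀ : ℝ}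
    (hF : ContinuousOn F (Icc a b)) (hG : ContinuousOn G (Icc a b))
    (hGpos : ∀ r ≥ a, 0 < G r) (htail : ∀ r ≥ b, F r ≤ C₀ * G r) :
    ∃ C > 0, ∀ r ≥ a, F r ≤ C * G r := by
  obtain ⟨M, hM⟩ := isCompact_Icc.bddAbove_image
    (hF.div hG fun r hr => (hGpos r hr.1).ne')
  refine ⟨max (max C₀ M) 1, by positivity, fun r hr => ?_⟩
  have hGr := hGpos r hr
  rcases le_total b r with hbr | hrb
  · exact (htail r hbr).trans (by gcongr; exact (le_max_left _ _).trans (le_max_left _ _))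
  · have : F r / G r ≤ M := hM ⟨r, ⟨hr, hrb⟩, rfl⟩
    rw [div_le_iff₀ hGr] at this
    exact this.trans (by gcongr; exact (le_max_right _ _).trans (le_max_left _ _))

section PerturbedOscillator

variable {w w' ε : ℝ → ℝ} {a : ℝ}

theorem hasDerivAt_energy {r : ℝ} (k : ℝ) (hw : HasDerivAt w (w' r) r)
    (hw' : HasDerivAt w' ((1 + ε r) * w r) r) :
    HasDerivAt (fun s => w' s ^ 2 - k * w s ^ 2) (2 * w r * w' r * (1 + ε r - k)) r :=
  ((hw'.pow 2).sub ((hw.pow 2).const_mul k)).congr_deriv (by ring)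

theorem eventually_half_mul_le_of_nonneg (hw : ∀ r ≥ a, HasDerivAt w (w' r) r)
    (hw' : ∀ r ≥ a, HasDerivAt w' ((1 + ε r) * w r) r) (hpos : ∀ r ≥ a, 0 < w r)
    (hε : ∀ r ≥ a, |ε r| ≤ 1 / 2) {r₁ : ℝ} (hr₁ : r₁ ≥ a) (h₁ : 0 ≤ w' r₁) :
    ∀ᶠ r in atTop, 1 / 2 * w r ≤ w' r := by
  have hle (r : ℝ) (hr : r ≥ r₁) : r ≥ a := hr₁.trans hr
  have hε' (r : ℝ) (hr : r ≥ r₁) := abs_le.1 (hε r (hle r hr))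
  have hw'_nonneg : ∀ r ≥ r₁, 0 ≤ w' r := fun r hr =>
    h₁.trans (monotoneOn_Ici_of_hasDerivAt_nonneg (fun r hr => hw' r (hle r hr))
      (fun r hr => mul_nonneg (by linarith [hε' r hr]) (hpos r (hle r hr)).le)
      self_mem_Ici hr hr)
  set w₀ := w r₁
  have hw₀ : 0 < w₀ := hpos r₁ hr₁
  have hw_ge : ∀ r ≥ r₁, w₀ ≤ w r := fun r hr =>
    monotoneOn_Ici_of_hasDerivAt_nonneg (fun r hr => hw r (hle r hr)) hw'_nonneg
      self_mem_Ici hr hr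
  have hw'_ge : ∀ r ≥ r₁ + 1, w₀ / 2 ≤ w' r := fun r hr => by
    have := add_mul_sub_le_of_le_hasDerivAt (c := w₀ / 2) (fun r hr => hw' r (hle r hr))
      (fun r hr => by nlinarith [hε' r hr, hw_ge r hr]) r (by linarith)
    nlinarith
  -- the energy `w'² - w²/4` grows at least linearly, so it eventually becomes positive
  have henergy : ∀ᶠ r in atTop, 0 < w' r ^ 2 - 1 / 4 * w r ^ 2 := by
    refine eventually_pos_of_le_hasDerivAt (a := r₁ + 1) (c := w₀ ^ 2 / 4) (by positivity)
      (fun r hr => hasDerivAt_energy _ (hw r (hle r (by linarith)))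
        (hw' r (hle r (by linarith)))) (fun r hr => ?_)
    have hr' : r ≥ r₁ := by linarith
    have hww' : w₀ * (w₀ / 2) ≤ w r * w' r :=
      mul_le_mul (hw_ge r hr') (hw'_ge r hr) (by positivity) (hpos r (hle r hr')).le
    have : 0 ≤ w r * w' r * (1 / 2 + ε r) :=
      mul_nonneg ((by positivity : 0 ≤ w₀ * (w₀ / 2)).trans hww') (by linarith [hε' r hr'])
    nlinarith
  filter_upwards [henergy, eventually_ge_atTop r₁] with r hE hr
  nlinarith [hw'_nonneg r hr, hpos r (hle r hr)]

theorem neg_of_tendsto_mul_exp_neg_half (hw : ∀ r ≥ a, HasDerivAt w (w' r) r)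
    (hw' : ∀ r ≥ a, HasDerivAt w' ((1 + ε r) * w r) r) (hpos : ∀ r ≥ a, 0 < w r)
    (hε : ∀ r ≥ a, |ε r| ≤ 1 / 2)
    (hdecay : Tendsto (fun r => w r * exp (-(1 / 2) * r)) atTop (𝓝 0)) :
    ∀ r ≥ a, w' r < 0 := by
  intro r₁ hr₁
  by_contra! h₁
  obtain ⟨r₂, hr₂⟩ := eventually_atTop.1
    ((eventually_half_mul_le_of_nonneg hw hw' hpos hε hr₁ h₁).and (eventually_ge_atTop a))
  have hgrowth := mul_exp_le_of_mul_le_hasDerivAt (fun r hr => hw r (hr₂ r hr).2)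
    (fun r hr => (hr₂ r hr).1)
  have hw₂ : 0 < w r₂ * exp (-(1 / 2) * r₂) := mul_pos (hpos r₂ (hr₂ r₂ le_rfl).2) (exp_pos _)
  obtain ⟨r, hr, hsmall⟩ :=
    ((eventually_ge_atTop r₂).and (hdecay.eventually_lt_const hw₂)).exists
  have := mul_le_mul_of_nonneg_right (hgrowth r hr) (exp_pos (-(1 / 2) * r)).le
  rw [mul_assoc, ← exp_add, show 1 / 2 * (r - r₂) + -(1 / 2) * r = -(1 / 2) * r₂ by ring]
    at this
  linarith

theorem le_neg_half_of_neg (hw : ∀ r ≥ a, HasDerivAt w (w' r) r)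
    (hw' : ∀ r ≥ a, HasDerivAt w' ((1 + ε r) * w r) r) (hpos : ∀ r ≥ a, 0 < w r)
    (hε : ∀ r ≥ a, |ε r| ≤ 1 / 2) (hneg : ∀ r ≥ a, w' r < 0) :
    ∀ r ≥ a, w' r ≤ -(1 / 2 * w r) := by
  intro r₀ hr₀
  suffices 0 ≤ w' r₀ ^ 2 - 1 / 4 * w r₀ ^ 2 by nlinarith [hneg r₀ hr₀, hpos r₀ hr₀]
  by_contra! hE
  have hle (r : ℝ) (hr : r ≥ r₀) : r ≥ a := hr₀.trans hr
  -- the energy `w'² - w²/4` is nonincreasing, so it stays negative and keeps `w` away from 0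
  have hanti : AntitoneOn (fun s => w' s ^ 2 - 1 / 4 * w s ^ 2) (Ici r₀) :=
    antitoneOn_Ici_of_hasDerivAt_nonpos
      (fun r hr => hasDerivAt_energy _ (hw r (hle r hr)) (hw' r (hle r hr)))
      (fun r hr => by
        have := (abs_le.1 (hε r (hle r hr))).1
        nlinarith [mul_pos (hpos r (hle r hr)) (neg_pos.2 (hneg r (hle r hr)))])
  have hw_le : ∀ r ≥ r₀, w r ≤ w r₀ := fun r hr =>
    antitoneOn_Ici_of_hasDerivAt_nonpos (fun r hr => hw r (hle r hr))
      (fun r hr => (hneg r (hle r hr)).le) self_mem_Ici hr hr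
  obtain ⟨μ, hμ, hw_ge⟩ : ∃ μ > 0, ∀ r ≥ r₀, 2 * μ ≤ w r := by
    refine ⟨-(w' r₀ ^ 2 - 1 / 4 * w r₀ ^ 2) * 2 / w r₀, div_pos (by linarith) (hpos r₀ hr₀),
      fun r hr => ?_⟩
    have := hanti self_mem_Ici hr hr
    rw [← mul_div_assoc, div_le_iff₀ (hpos r₀ hr₀)]
    nlinarith [hw_le r hr, hpos r (hle r hr), sq_nonneg (w' r)]
  obtain ⟨r, hr, hr'⟩ := ((eventually_pos_of_le_hasDerivAt hμ (fun r hr => hw' r (hle r hr))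
    (fun r hr => by nlinarith [(abs_le.1 (hε r (hle r hr))).1, hw_ge r hr])).and
    (eventually_ge_atTop r₀)).exists
  exact (hneg r (hle r hr')).not_gt hr

theorem neg_three_halves_le_of_neg (hw : ∀ r ≥ a, HasDerivAt w (w' r) r)
    (hw' : ∀ r ≥ a, HasDerivAt w' ((1 + ε r) * w r) r) (hpos : ∀ r ≥ a, 0 < w r)
    (hε : ∀ r ≥ a, |ε r| ≤ 1 / 2) (hneg : ∀ r ≥ a, w' r < 0) :
    ∀ r ≥ a, -(3 / 2 * w r) ≤ w' r := by
  intro r₀ hr₀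
  suffices w' r₀ ^ 2 - 7 / 4 * w r₀ ^ 2 ≤ 0 by nlinarith [hneg r₀ hr₀, hpos r₀ hr₀]
  by_contra! hF
  have hle (r : ℝ) (hr : r ≥ r₀) : r ≥ a := hr₀.trans hr
  -- the energy `w'² - 7w²/4` is nondecreasing, so `w'` stays below a negative constant
  have hmono : MonotoneOn (fun s => w' s ^ 2 - 7 / 4 * w s ^ 2) (Ici r₀) :=
    monotoneOn_Ici_of_hasDerivAt_nonneg
      (fun r hr => hasDerivAt_energy _ (hw r (hle r hr)) (hw' r (hle r hr)))
      (fun r hr => by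
        have := (abs_le.1 (hε r (hle r hr))).2
        nlinarith [mul_pos (hpos r (hle r hr)) (neg_pos.2 (hneg r (hle r hr)))])
  have hw'_ge : ∀ r ≥ r₀, w' r₀ ≤ w' r := fun r hr =>
    monotoneOn_Ici_of_hasDerivAt_nonneg (fun r hr => hw' r (hle r hr))
      (fun r hr => mul_nonneg (by linarith [(abs_le.1 (hε r (hle r hr))).1])
        (hpos r (hle r hr)).le) self_mem_Ici hr hr
  obtain ⟨β, hβ, hw'_le⟩ : ∃ β > 0, ∀ r ≥ r₀, w' r ≤ -β := by
    have hw'₀ : 0 < -w' r₀ := neg_pos.2 (hneg r₀ hr₀)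
    refine ⟨(w' r₀ ^ 2 - 7 / 4 * w r₀ ^ 2) / -w' r₀, div_pos hF hw'₀, fun r hr => ?_⟩
    have := hmono self_mem_Ici hr hr
    rw [le_neg, div_le_iff₀ hw'₀]
    nlinarith [hw'_ge r hr, hneg r (hle r hr), sq_nonneg (w r)]
  obtain ⟨r, hr, hr'⟩ := ((eventually_pos_of_le_hasDerivAt hβ
    (fun r hr => (hw r (hle r hr)).neg) (fun r hr => by linarith [hw'_le r hr])).and
    (eventually_ge_atTop r₀)).exists
  exact (hpos r (hle r hr')).not_gt (by simpa using hr)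

theorem abs_one_add_div_le_of_riccati {K : ℝ} (ha : 0 < a) (hK : 0 < K)
    (hw : ∀ r ≥ a, HasDerivAt w (w' r) r)
    (hw' : ∀ r ≥ a, HasDerivAt w' ((1 + ε r) * w r) r) (hpos : ∀ r ≥ a, 0 < w r)
    (hε : ∀ r ≥ a, |ε r| ≤ K / r ^ 2) (hupper : ∀ r ≥ a, w' r ≤ -(1 / 2 * w r))
    (hlower : ∀ r ≥ a, -(3 / 2 * w r) ≤ w' r) :
    ∀ r ≥ a, |1 + w' r / w r| ≤ K / r ^ 2 := by
  have hz (r : ℝ) (hr : r ≥ a) : HasDerivAt (fun s => 1 + w' s / w s)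
      (ε r + (2 - (1 + w' r / w r)) * (1 + w' r / w r)) r :=
    (((hw' r hr).div (hw r hr) (hpos r hr).ne').const_add 1).congr_deriv (by
      field_simp [(hpos r hr).ne']
      ring)
  have hzb (r : ℝ) (hr : r ≥ a) : -(1 / 2) ≤ 1 + w' r / w r ∧ 1 + w' r / w r ≤ 1 / 2 := by
    have h₁ : -(3 / 2) ≤ w' r / w r := by
      rw [le_div_iff₀ (hpos r hr)]; linarith [hlower r hr]
    have h₂ : w' r / w r ≤ -(1 / 2) := by
      rw [div_le_iff₀ (hpos r hr)]; linarith [hupper r hr]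
    constructor <;> linarith
  intro r hr
  refine abs_le.2 ⟨?_, ?_⟩
  · have := le_div_sq_of_hasDerivAt_riccati (y := fun s => -(1 + w' s / w s))
      (e := fun s => -ε s) (c := fun s => 2 - (1 + w' s / w s)) (B := 1 / 2) ha hK
      (fun r hr => (hz r hr).neg.congr_deriv (by ring))
      (fun r hr => by linarith [hzb r hr]) (fun r hr => by linarith [hzb r hr])
      (fun r hr => by rw [abs_neg]; exact hε r hr) r hr
    linarith
  · exact le_div_sq_of_hasDerivAt_riccati (c := fun s => 2 - (1 + w' s / w s)) (B := 1 / 2)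
      ha hK hz (fun r hr => by linarith [hzb r hr]) (fun r hr => (hzb r hr).2) hε r hr

end PerturbedOscillator

theorem exists_abs_sub_exp_neg_le {w w' : ℝ → ℝ} {a K : ℝ} (ha : 1 ≤ a) (hKa : K ≤ a)
    (hw : ∀ r ≥ a, HasDerivAt w (w' r) r) (hpos : ∀ r ≥ a, 0 < w r)
    (hz : ∀ r ≥ a, |1 + w' r / w r| ≤ K / r ^ 2) :
    ∃ c > 0, ∀ r ≥ a, |w r - c * exp (-r)| + |w' r + c * exp (-r)| ≤
      7 * K * c * exp (-r) / r := by
  obtain ⟨l, hl⟩ := exists_abs_sub_le_div_of_abs_hasDerivAt_le (f := fun r => log (w r) + r)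
    (by linarith) (fun r hr => (((hw r hr).log (hpos r hr).ne').add (hasDerivAt_id r)).congr_deriv
      (add_comm _ _)) hz
  refine ⟨exp l, exp_pos l, fun r hr => ?_⟩
  have hr₀ : 0 < r := by linarith
  have hwr := hpos r hr
  have hK : 0 ≤ K := by
    simpa using (le_div_iff₀ (by positivity)).1 ((abs_nonneg _).trans (hz r hr))
  set E := exp l * exp (-r)
  have hE : 0 < E := by positivity
  have hKr : K / r ≤ 1 := div_le_one_of_le₀ (hKa.trans hr) hr₀.le
  have hw_eq : w r - E = E * (exp (log (w r) + r - l) - 1) := by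
    rw [mul_sub, mul_one, mul_assoc, ← exp_add, ← exp_add, show l + (-r + (log (w r) + r - l)) =
      log (w r) by ring, exp_log hwr]
  have h₁ : |w r - E| ≤ 2 * K / r * E := by
    rw [hw_eq, abs_mul, abs_of_pos hE, mul_comm]
    gcongr
    calc |exp (log (w r) + r - l) - 1| ≤ 2 * |log (w r) + r - l| :=
          abs_exp_sub_one_le ((hl r hr).trans hKr)
      _ ≤ 2 * K / r := by rw [mul_div_assoc]; gcongr; exact hl r hr
  have h₂ : w r ≤ 3 * E := by
    have : 2 * K / r * E ≤ 2 * E := by rw [mul_div_assoc]; gcongr; linarith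
    linarith [(abs_le.1 h₁).2]
  have h₃ : |w' r + E| ≤ K / r ^ 2 * (3 * E) + 2 * K / r * E := by
    have : w' r + E = (1 + w' r / w r) * w r - (w r - E) := by field_simp; ring
    rw [this]
    refine (abs_sub _ _).trans (add_le_add ?_ h₁)
    rw [abs_mul, abs_of_pos hwr]
    exact mul_le_mul (hz r hr) h₂ hwr.le (by positivity)
  have h₄ : K / r ^ 2 ≤ K / r := div_le_div_of_nonneg_left hK hr₀ (by nlinarith)
  calc |w r - E| + |w' r + E| ≤ 2 * K / r * E + (K / r * (3 * E) + 2 * K / r * E) := by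
        gcongr
        exact h₃.trans (by gcongr)
    _ = 7 * K * (exp l) * exp (-r) / r := by simp only [E]; ring

theorem eventually_rpow_le_one_div_sq {g : ℝ → ℝ} {C b s : ℝ} (hb : 0 < b) (hs : 0 < s)
    (hg : ∀ᶠ r in atTop, 0 ≤ g r ∧ g r ≤ C * exp (-b * r)) :
    ∀ᶠ r in atTop, g r ^ s ≤ 1 / r ^ 2 := by
  have hlim := (tendsto_rpow_mul_exp_neg_mul_atTop_nhds_zero 2 (b * s) (by positivity)).const_mul
    (C ^ s)
  rw [mul_zero] at hlim
  filter_upwards [hlim.eventually_lt_const one_pos, hg, eventually_gt_atTop 0]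
    with r hsmall ⟨hg₀, hgC⟩ hr
  have hC : 0 ≤ C := nonneg_of_mul_nonneg_left (hg₀.trans hgC) (exp_pos _)
  rw [rpow_two, ← mul_assoc, mul_comm (C ^ s), mul_assoc] at hsmall
  rw [le_div_iff₀ (by positivity), mul_comm]
  calc r ^ 2 * g r ^ s ≤ r ^ 2 * (C * exp (-b * r)) ^ s := by gcongr
    _ = r ^ 2 * (C ^ s * exp (-(b * s) * r)) := by
        rw [mul_rpow hC (exp_pos _).le, ← exp_mul]; ring_nf
    _ ≤ 1 := hsmall.le

theorem abs_sub_add_abs_add_le_of_liouville {r ν c E x x' B : ℝ} (hr : 0 < r) (hν : 0 ≤ ν)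
    (hx : 0 ≤ x)
    (hB : |r ^ ν * x - c * E| + |ν * r ^ (ν - 1) * x + r ^ ν * x' + c * E| ≤ B) :
    |x - c * r ^ (-ν) * E| + |x' + c * r ^ (-ν) * E| ≤ r ^ (-ν) * (B + ν / r * (r ^ ν * x)) := by
  rw [rpow_sub_one hr.ne'] at hB
  rw [rpow_neg hr.le]
  have hP : 0 < r ^ ν := rpow_pos_of_pos hr ν
  have e₁ : x - c * (r ^ ν)⁻¹ * E = (r ^ ν)⁻¹ * (r ^ ν * x - c * E) := by field_simp
  have e₂ : x' + c * (r ^ ν)⁻¹ * E = (r ^ ν)⁻¹ *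
      ((ν * (r ^ ν / r) * x + r ^ ν * x' + c * E) - ν / r * (r ^ ν * x)) := by
    field_simp
    ring
  have ht : 0 ≤ ν / r * (r ^ ν * x) := by positivity
  rw [e₁, e₂, abs_mul, abs_mul, abs_of_pos (inv_pos.2 hP), ← mul_add]
  refine mul_le_mul_of_nonneg_left ?_ (inv_pos.2 hP).le
  calc _ ≤ |r ^ ν * x - c * E| + (|ν * (r ^ ν / r) * x + r ^ ν * x' + c * E| +
        |ν / r * (r ^ ν * x)|) := add_le_add_right (abs_sub _ _) _
    _ ≤ B + ν / r * (r ^ ν * x) := by rw [abs_of_nonneg ht]; linarith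

section RadialProfile

variable {q : ℝ → ℝ} {ν p : ℝ}

theorem hasDerivAt_rpow_mul {r : ℝ} (hr : 0 < r) (hq₁ : HasDerivAt q (deriv q r) r) :
    HasDerivAt (fun s => s ^ ν * q s) (ν * r ^ (ν - 1) * q r + r ^ ν * deriv q r) r :=
  (hasDerivAt_rpow_const (Or.inl hr.ne')).mul hq₁

theorem hasDerivAt_liouville {r : ℝ} (hr : 0 < r) (hq : 0 < q r)
    (hq₁ : HasDerivAt q (deriv q r) r) (hq₂ : HasDerivAt (deriv q) (deriv (deriv q) r) r)
    (hode : deriv (deriv q) r + 2 * ν / r * deriv q r - q r + q r ^ p = 0) :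
    HasDerivAt (fun s => ν * s ^ (ν - 1) * q s + s ^ ν * deriv q s)
      ((1 + (ν * (ν - 1) / r ^ 2 - q r ^ (p - 1))) * (r ^ ν * q r)) r := by
  have hpow (μ : ℝ) : HasDerivAt (fun s => s ^ μ) (μ * r ^ (μ - 1)) r :=
    hasDerivAt_rpow_const (Or.inl hr.ne')
  refine ((((hpow (ν - 1)).const_mul ν).mul hq₁).add ((hpow ν).mul hq₂)).congr_deriv ?_
  have hq'' : deriv (deriv q) r = q r - q r ^ p - 2 * ν / r * deriv q r := by linarith
  rw [hq'', rpow_sub_one hr.ne', rpow_sub_one hr.ne', rpow_sub_one hq.ne']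
  field_simp
  ring

theorem tendsto_liouville_potential (hp : 1 < p) (hlim : Tendsto q atTop (𝓝 0)) :
    Tendsto (fun r => ν * (ν - 1) / r ^ 2 - q r ^ (p - 1)) atTop (𝓝 0) := by
  have h₁ : Tendsto (fun r : ℝ => ν * (ν - 1) / r ^ 2) atTop (𝓝 0) :=
    tendsto_const_nhds.div_atTop (tendsto_pow_atTop two_ne_zero)
  have h₂ := hlim.rpow_const (p := p - 1) (Or.inr (by linarith))
  rw [zero_rpow (by linarith)] at h₂
  simpa using h₁.sub h₂

theorem exists_liouville_slope_bounds (hp : 1 < p) (hpos : ∀ r > 0, 0 < q r)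
    (hq₁ : ∀ r > 0, HasDerivAt q (deriv q r) r)
    (hq₂ : ∀ r > 0, HasDerivAt (deriv q) (deriv (deriv q) r) r)
    (hode : ∀ r > 0, deriv (deriv q) r + 2 * ν / r * deriv q r - q r + q r ^ p = 0)
    (hlim : Tendsto q atTop (𝓝 0)) :
    ∃ R ≥ 1, ∀ r ≥ R, |ν * (ν - 1) / r ^ 2 - q r ^ (p - 1)| ≤ 1 / 2 ∧
      -(3 / 2 * (r ^ ν * q r)) ≤ ν * r ^ (ν - 1) * q r + r ^ ν * deriv q r ∧
      ν * r ^ (ν - 1) * q r + r ^ ν * deriv q r ≤ -(1 / 2 * (r ^ ν * q r)) := by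
  obtain ⟨R, hR⟩ := eventually_atTop.1 (((tendsto_liouville_potential hp hlim).eventually
    (Icc_mem_nhds (by norm_num : -(1 / 2 : ℝ) < 0) one_half_pos)).and (eventually_ge_atTop 1))
  have hR₀ (r : ℝ) (hr : r ≥ R) : 0 < r := one_pos.trans_le (hR r hr).2
  have hw (r : ℝ) (hr : r ≥ R) := hasDerivAt_rpow_mul (ν := ν) (hR₀ r hr) (hq₁ r (hR₀ r hr))
  have hw' (r : ℝ) (hr : r ≥ R) := hasDerivAt_liouville (hR₀ r hr) (hpos r (hR₀ r hr))
    (hq₁ r (hR₀ r hr)) (hq₂ r (hR₀ r hr)) (hode r (hR₀ r hr))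
  have hwpos (r : ℝ) (hr : r ≥ R) : 0 < r ^ ν * q r :=
    mul_pos (rpow_pos_of_pos (hR₀ r hr) ν) (hpos r (hR₀ r hr))
  have hε (r : ℝ) (hr : r ≥ R) := abs_le.2 (hR r hr).1
  have hdecay : Tendsto (fun r => r ^ ν * q r * exp (-(1 / 2) * r)) atTop (𝓝 0) := by
    have := (tendsto_rpow_mul_exp_neg_mul_atTop_nhds_zero ν (1 / 2) one_half_pos).mul hlim
    rw [zero_mul] at this
    exact this.congr fun r => by ring
  have hneg := neg_of_tendsto_mul_exp_neg_half hw hw' hwpos hε hdecay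
  exact ⟨R, (hR R le_rfl).2, fun r hr => ⟨hε r hr,
    neg_three_halves_le_of_neg hw hw' hwpos hε hneg r hr,
    le_neg_half_of_neg hw hw' hwpos hε hneg r hr⟩⟩

theorem eventually_abs_liouville_potential_le {C : ℝ} (hp : 1 < p)
    (hq : ∀ᶠ r in atTop, 0 ≤ q r ∧ q r ≤ C * exp (-(1 / 2) * r)) :
    ∀ᶠ r in atTop, |ν * (ν - 1) / r ^ 2 - q r ^ (p - 1)| ≤ (|ν * (ν - 1)| + 1) / r ^ 2 := by
  filter_upwards [eventually_rpow_le_one_div_sq (s := p - 1) one_half_pos (by linarith) hq, hq,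
    eventually_gt_atTop 0] with r hqp hq hr
  calc |ν * (ν - 1) / r ^ 2 - q r ^ (p - 1)| ≤ |ν * (ν - 1) / r ^ 2| + |q r ^ (p - 1)| :=
        abs_sub _ _
    _ ≤ |ν * (ν - 1)| / r ^ 2 + 1 / r ^ 2 := by
        rw [abs_div, abs_of_pos (by positivity : (0 : ℝ) < r ^ 2),
          abs_of_nonneg (rpow_nonneg hq.1 _)]
        gcongr
    _ = (|ν * (ν - 1)| + 1) / r ^ 2 := by ring

theorem exists_abs_one_add_div_le (hν : 0 ≤ ν) (hp : 1 < p) (hpos : ∀ r > 0, 0 < q r)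
    (hq₁ : ∀ r > 0, HasDerivAt q (deriv q r) r)
    (hq₂ : ∀ r > 0, HasDerivAt (deriv q) (deriv (deriv q) r) r)
    (hode : ∀ r > 0, deriv (deriv q) r + 2 * ν / r * deriv q r - q r + q r ^ p = 0)
    (hlim : Tendsto q atTop (𝓝 0)) :
    ∃ K > 0, ∃ S, 1 ≤ S ∧ K ≤ S ∧ ∀ r ≥ S,
      |1 + (ν * r ^ (ν - 1) * q r + r ^ ν * deriv q r) / (r ^ ν * q r)| ≤ K / r ^ 2 := by
  obtain ⟨R, hR₁, hR⟩ := exists_liouville_slope_bounds hp hpos hq₁ hq₂ hode hlim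
  have hR₀ (r : ℝ) (hr : r ≥ R) : 0 < r := one_pos.trans_le (hR₁.trans hr)
  have hw (r : ℝ) (hr : r ≥ R) := hasDerivAt_rpow_mul (ν := ν) (hR₀ r hr) (hq₁ r (hR₀ r hr))
  have hw_decay := le_mul_exp_of_hasDerivAt_le_mul (c := -(1 / 2)) hw
    (fun r hr => by linarith [(hR r hr).2.2])
  have hq_le : ∀ᶠ r in atTop,
      0 ≤ q r ∧ q r ≤ R ^ ν * q R * exp (1 / 2 * R) * exp (-(1 / 2) * r) := by
    filter_upwards [eventually_ge_atTop R] with r hr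
    refine ⟨(hpos r (hR₀ r hr)).le, ?_⟩
    calc q r ≤ r ^ ν * q r :=
          le_mul_of_one_le_left (hpos r (hR₀ r hr)).le (one_le_rpow (hR₁.trans hr) hν)
      _ ≤ _ := hw_decay r hr
      _ = _ := by rw [show -(1 / 2) * (r - R) = 1 / 2 * R + -(1 / 2) * r by ring, exp_add]; ring
  obtain ⟨S₀, hS₀⟩ := eventually_atTop.1 (eventually_abs_liouville_potential_le hp hq_le)
  set K := |ν * (ν - 1)| + 1
  set S := max (max R K) S₀
  have hRS : R ≤ S := (le_max_left _ _).trans (le_max_left _ _)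
  have hle (r : ℝ) (hr : r ≥ S) : r ≥ R := hRS.trans hr
  refine ⟨K, by positivity, S, hR₁.trans hRS, (le_max_right _ _).trans (le_max_left _ _),
    abs_one_add_div_le_of_riccati (ε := fun r => ν * (ν - 1) / r ^ 2 - q r ^ (p - 1))
      (hR₀ S hRS) (by positivity) (fun r hr => hw r (hle r hr)) (fun r hr => ?_)
      (fun r hr => mul_pos (rpow_pos_of_pos (hR₀ r (hle r hr)) ν) (hpos r (hR₀ r (hle r hr))))
      (fun r hr => hS₀ r ((le_max_right _ _).trans hr)) (fun r hr => (hR r (hle r hr)).2.2)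
      (fun r hr => (hR r (hle r hr)).2.1)⟩
  have hr₀ := hR₀ r (hle r hr)
  exact hasDerivAt_liouville hr₀ (hpos r hr₀) (hq₁ r hr₀) (hq₂ r hr₀) (hode r hr₀)

theorem exists_tail_asymptotics (hν : 0 ≤ ν) (hp : 1 < p) (hpos : ∀ r > 0, 0 < q r)
    (hq₁ : ∀ r > 0, HasDerivAt q (deriv q r) r)
    (hq₂ : ∀ r > 0, HasDerivAt (deriv q) (deriv (deriv q) r) r)
    (hode : ∀ r > 0, deriv (deriv q) r + 2 * ν / r * deriv q r - q r + q r ^ p = 0)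
    (hlim : Tendsto q atTop (𝓝 0)) :
    ∃ c > 0, ∃ C S, 1 ≤ S ∧ ∀ r ≥ S, |q r - c * r ^ (-ν) * exp (-r)| +
      |deriv q r + c * r ^ (-ν) * exp (-r)| ≤ C * (r ^ (-ν - 1) * exp (-r)) := by
  obtain ⟨K, hK, S, hS₁, hKS, hz⟩ := exists_abs_one_add_div_le hν hp hpos hq₁ hq₂ hode hlim
  have hS₀ (r : ℝ) (hr : r ≥ S) : 0 < r := one_pos.trans_le (hS₁.trans hr)
  obtain ⟨c, hc, hasym⟩ := exists_abs_sub_exp_neg_le (w := fun s => s ^ ν * q s) hS₁ hKS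
    (fun r hr => hasDerivAt_rpow_mul (hS₀ r hr) (hq₁ r (hS₀ r hr)))
    (fun r hr => mul_pos (rpow_pos_of_pos (hS₀ r hr) ν) (hpos r (hS₀ r hr))) hz
  refine ⟨c, hc, (7 * K + ν * (1 + 7 * K)) * c, S, hS₁, fun r hr => ?_⟩
  have hr₀ := hS₀ r hr
  have hw_le : r ^ ν * q r ≤ (1 + 7 * K) * c * exp (-r) := by
    have := (abs_le.1 (le_of_add_le_of_nonneg_left (hasym r hr) (abs_nonneg _))).2
    have : 7 * K * c * exp (-r) / r ≤ 7 * K * c * exp (-r) :=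
      div_le_self (by positivity) (hS₁.trans hr)
    linarith
  refine (abs_sub_add_abs_add_le_of_liouville hr₀ hν (hpos r hr₀).le (hasym r hr)).trans ?_
  calc r ^ (-ν) * (7 * K * c * exp (-r) / r + ν / r * (r ^ ν * q r))
      ≤ r ^ (-ν) * (7 * K * c * exp (-r) / r + ν / r * ((1 + 7 * K) * c * exp (-r))) := by
        gcongr
    _ = (7 * K + ν * (1 + 7 * K)) * c * (r ^ (-ν - 1) * exp (-r)) := by
        rw [rpow_sub_one hr₀.ne']
        ring

end RadialProfile

/-- Asymptotics of the radial profile of the ground state: a positive, twice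
continuously differentiable solution of `q'' + ((d−1)/r) q' − q + q^p = 0` which
tends to `0` at infinity satisfies
`q(r) ≈ c_q r^{−(d−1)/2} e^{−r}` and `q'(r) ≈ −c_q r^{−(d−1)/2} e^{−r}`. -/
theorem statement13
    (d : ℕ) (hd : 1 ≤ d) (p : ℝ) (hp : 1 < p) (q : ℝ → ℝ)
    (hpos : ∀ r : ℝ, 0 < r → 0 < q r)
    (hreg : ContDiffOn ℝ 2 q (Set.Ioi 0))
    (hode : ∀ r : ℝ, 0 < r →
      deriv (deriv q) r + (((d : ℝ) - 1) / r) * deriv q r - q r + q r ^ p = 0)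
    (hlim : Tendsto q atTop (𝓝 0)) :
    ∃ cq > (0 : ℝ), ∃ C > (0 : ℝ), ∀ r : ℝ, 1 ≤ r →
      |q r - cq * r ^ (-(((d : ℝ) - 1) / 2)) * Real.exp (-r)|
        + |deriv q r + cq * r ^ (-(((d : ℝ) - 1) / 2)) * Real.exp (-r)|
        ≤ C * r ^ (-(((d : ℝ) + 1) / 2)) * Real.exp (-r) := by
  set ν : ℝ := ((d : ℝ) - 1) / 2 with hν_def
  have hν : 0 ≤ ν := by
    have : (1 : ℝ) ≤ d := by exact_mod_cast hd
    linarith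
  have hderiv : ContDiffOn ℝ 1 (deriv q) (Ioi 0) := hreg.deriv_of_isOpen isOpen_Ioi (by norm_num)
  have hq₁ (r : ℝ) (hr : r > 0) : HasDerivAt q (deriv q r) r :=
    ((hreg.differentiableOn (by norm_num)).differentiableAt (Ioi_mem_nhds hr)).hasDerivAt
  have hq₂ (r : ℝ) (hr : r > 0) : HasDerivAt (deriv q) (deriv (deriv q) r) r :=
    ((hderiv.differentiableOn one_ne_zero).differentiableAt (Ioi_mem_nhds hr)).hasDerivAt
  obtain ⟨c, hc, C₀, S, hS₁, htail⟩ := exists_tail_asymptotics hν hp hpos hq₁ hq₂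
    (fun r hr => by rw [hν_def, mul_div_cancel₀ _ two_ne_zero]; exact hode r hr) hlim
  have hIcc : Icc 1 S ⊆ Ioi 0 := fun r hr => one_pos.trans_le hr.1
  have hq := hreg.continuousOn.mono hIcc
  have hdq := hderiv.continuousOn.mono hIcc
  have hrpow (μ : ℝ) : ContinuousOn (fun r : ℝ => r ^ μ) (Icc 1 S) :=
    continuousOn_id.rpow_const fun r hr => Or.inl (hIcc hr).ne'
  obtain ⟨C, hC, hbound⟩ := exists_le_mul_of_le_mul_on_Ici
    (F := fun r => |q r - c * r ^ (-ν) * exp (-r)| + |deriv q r + c * r ^ (-ν) * exp (-r)|)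
    (G := fun r => r ^ (-ν - 1) * exp (-r)) (by fun_prop) (by fun_prop)
    (fun r hr => by have := one_pos.trans_le hr; positivity) htail
  refine ⟨c, hc, C, hC, fun r hr => ?_⟩
  rw [mul_assoc C, show -(((d : ℝ) + 1) / 2) = -ν - 1 by ring]
  exact hbound r hr
end

section
/- Let d ≥ 1 and let Q : ℝ^d → ℝ be measurable with |Q(x)| ≤ C₁ (1+|x|)^{−(d−1)/2} e^{−|x|} for all x ∈ ℝ^d and some C₁ > 0. Then for any exponents 0 < m < m' there exists C > 0 such that for all z₁, z₂ ∈ ℝ^d with |z₁ − z₂| ≥ 1: ∫_{ℝ^d} |Q(x−z₁)|^m |Q(x−z₂)|^{m'} dx ≤ C (|z₁−z₂|^{−(d−1)/2} e^{−|z₁−z₂|})^m. -/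
/-!
Write `p(t) = (1 + t)^{-a} e^{-t}` with `a = (d - 1)/2 ≥ 0`. Since `(1 + u)(1 + v) ≥ 1 + r` and
`e^{-u} e^{-v} ≤ e^{-r}` whenever `r ≤ u + v`, the profile is submultiplicative along the triangle
inequality: `p(u) p(v) ≤ p(r)`. Splitting `p(v)^{m'} = p(v)^m p(v)^{m' - m}` and taking
`u = |x - z₁|`, `v = |x - z₂|`, `r = |z₁ - z₂|`, the integrand is at most
`C₁^{m+m'} p(r)^m e^{-(m' - m)|x - z₂|}`, and the spare factor `e^{-(m' - m)|x - z₂|}` is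
integrable because `m < m'`.
-/

noncomputable section

open MeasureTheory

/-- Euclidean space `ℝ^d`. -/
abbrev Euc (d : ℕ) := EuclideanSpace ℝ (Fin d)

open Real Nat

lemma exp_neg_mul_le_mul_one_add_rpow_neg {ε t : ℝ} (hε : 0 < ε) (ht : 0 ≤ t) (k : ℕ) :
    exp (-(ε * t)) ≤ exp ε * k ! / ε ^ k * (1 + t) ^ (-(k : ℝ)) := by
  have hεt : 0 < ε * (1 + t) := by positivity
  have htaylor : (ε * (1 + t)) ^ k / k ! ≤ exp ε * exp (ε * t) := by
    rw [← exp_add]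
    exact (pow_div_factorial_le_exp _ hεt.le k).trans_eq (by ring_nf)
  rw [rpow_neg (by positivity), rpow_natCast, exp_neg, inv_le_iff_one_le_mul₀ (exp_pos _)]
  rw [div_le_iff₀ (by positivity), mul_pow] at htaylor
  calc (1 : ℝ) = ε ^ k * (1 + t) ^ k / (ε ^ k * (1 + t) ^ k) := by field_simp
    _ ≤ exp ε * exp (ε * t) * k ! / (ε ^ k * (1 + t) ^ k) := by gcongr
    _ = exp ε * k ! / ε ^ k * ((1 + t) ^ k)⁻¹ * exp (ε * t) := by field_simp

section ExpDecay

variable {E : Type*} [NormedAddCommGroup E] [NormedSpace ℝ E] [FiniteDimensional ℝ E]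
  [MeasurableSpace E] [BorelSpace E] {μ : Measure E} [μ.IsAddHaarMeasure]

lemma integrable_exp_neg_mul_norm {ε : ℝ} (hε : 0 < ε) :
    Integrable (fun x : E => exp (-(ε * ‖x‖))) μ := by
  set k := Module.finrank ℝ E + 1
  have hk : (Module.finrank ℝ E : ℝ) < k := by simp [k]
  refine ((integrable_one_add_norm hk).const_mul (exp ε * k ! / ε ^ k)).mono' (by fun_prop) ?_
  filter_upwards with x
  rw [norm_of_nonneg (exp_pos _).le]
  exact exp_neg_mul_le_mul_one_add_rpow_neg hε (norm_nonneg x) _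

end ExpDecay

def groundProfile (a t : ℝ) : ℝ := (1 + t) ^ (-a) * exp (-t)

section GroundProfile

variable {a t u v r m m' : ℝ}

lemma groundProfile_pos (ht : 0 ≤ t) : 0 < groundProfile a t := by
  unfold groundProfile; positivity

lemma groundProfile_le_exp_neg (ha : 0 ≤ a) (ht : 0 ≤ t) : groundProfile a t ≤ exp (-t) :=
  mul_le_of_le_one_left (exp_pos _).le (rpow_le_one_of_one_le_of_nonpos (by linarith) (by linarith))

lemma groundProfile_le_rpow_neg_mul_exp_neg (ha : 0 ≤ a) (ht : 0 < t) :
    groundProfile a t ≤ t ^ (-a) * exp (-t) := by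
  refine mul_le_mul_of_nonneg_right ?_ (exp_pos _).le
  exact rpow_le_rpow_of_nonpos ht (by linarith) (neg_nonpos.mpr ha)

lemma groundProfile_mul_le (ha : 0 ≤ a) (hu : 0 ≤ u) (hv : 0 ≤ v) (hr : 0 ≤ r)
    (huvr : r ≤ u + v) : groundProfile a u * groundProfile a v ≤ groundProfile a r := by
  have hpoly : (1 + u) ^ (-a) * (1 + v) ^ (-a) ≤ (1 + r) ^ (-a) := by
    rw [← mul_rpow (by linarith) (by linarith)]
    exact rpow_le_rpow_of_nonpos (by linarith) (by nlinarith) (by linarith)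
  have hexp : exp (-u) * exp (-v) ≤ exp (-r) := by
    rw [← exp_add]; exact exp_le_exp.mpr (by linarith)
  calc groundProfile a u * groundProfile a v
      = ((1 + u) ^ (-a) * (1 + v) ^ (-a)) * (exp (-u) * exp (-v)) := by
        unfold groundProfile; ring
    _ ≤ (1 + r) ^ (-a) * exp (-r) := by gcongr

lemma groundProfile_rpow_mul_rpow_le (ha : 0 ≤ a) (hm : 0 ≤ m) (hmm : m ≤ m')
    (hu : 0 ≤ u) (hv : 0 ≤ v) (hr : 0 ≤ r) (huvr : r ≤ u + v) :
    groundProfile a u ^ m * groundProfile a v ^ m'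
      ≤ groundProfile a r ^ m * exp (-((m' - m) * v)) := by
  have hpu := groundProfile_pos (a := a) hu
  have hpv := groundProfile_pos (a := a) hv
  calc groundProfile a u ^ m * groundProfile a v ^ m'
      = (groundProfile a u * groundProfile a v) ^ m * groundProfile a v ^ (m' - m) := by
        rw [mul_rpow hpu.le hpv.le, mul_assoc, ← rpow_add hpv]; ring_nf
    _ ≤ groundProfile a r ^ m * exp (-v) ^ (m' - m) := by
        exact mul_le_mul (rpow_le_rpow (by positivity) (groundProfile_mul_le ha hu hv hr huvr) hm)
          (rpow_le_rpow hpv.le (groundProfile_le_exp_neg ha hv) (by linarith))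
          (by positivity) (rpow_nonneg (groundProfile_pos hr).le _)
    _ = groundProfile a r ^ m * exp (-((m' - m) * v)) := by
        rw [← exp_mul]; ring_nf

end GroundProfile

section Interaction

variable {E : Type*} [NormedAddCommGroup E] {f : E → ℝ} {a C₁ m m' : ℝ}

lemma abs_rpow_mul_abs_rpow_le (ha : 0 ≤ a) (hC₁ : 0 ≤ C₁)
    (hf : ∀ x, |f x| ≤ C₁ * groundProfile a ‖x‖) (hm : 0 ≤ m) (hmm : m ≤ m') (x z₁ z₂ : E) :
    |f (x - z₁)| ^ m * |f (x - z₂)| ^ m'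
      ≤ C₁ ^ m * C₁ ^ m' * groundProfile a ‖z₁ - z₂‖ ^ m * exp (-((m' - m) * ‖x - z₂‖)) := by
  have htri : ‖z₁ - z₂‖ ≤ ‖x - z₁‖ + ‖x - z₂‖ :=
    (norm_sub_le_norm_sub_add_norm_sub z₁ x z₂).trans_eq (by rw [norm_sub_rev])
  calc |f (x - z₁)| ^ m * |f (x - z₂)| ^ m'
      ≤ (C₁ * groundProfile a ‖x - z₁‖) ^ m * (C₁ * groundProfile a ‖x - z₂‖) ^ m' :=
        mul_le_mul (rpow_le_rpow (abs_nonneg _) (hf _) hm)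
          (rpow_le_rpow (abs_nonneg _) (hf _) (hm.trans hmm)) (by positivity)
          (rpow_nonneg (mul_nonneg hC₁ (groundProfile_pos (norm_nonneg _)).le) _)
    _ = C₁ ^ m * C₁ ^ m' * (groundProfile a ‖x - z₁‖ ^ m * groundProfile a ‖x - z₂‖ ^ m') := by
        rw [mul_rpow hC₁ (groundProfile_pos (norm_nonneg _)).le,
          mul_rpow hC₁ (groundProfile_pos (norm_nonneg _)).le]
        ring
    _ ≤ C₁ ^ m * C₁ ^ m' * (groundProfile a ‖z₁ - z₂‖ ^ m * exp (-((m' - m) * ‖x - z₂‖))) :=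
        mul_le_mul_of_nonneg_left (groundProfile_rpow_mul_rpow_le ha hm hmm (norm_nonneg _)
          (norm_nonneg _) (norm_nonneg _) htri) (by positivity)
    _ = _ := by ring

variable [NormedSpace ℝ E] [FiniteDimensional ℝ E] [MeasurableSpace E] [BorelSpace E]
  {μ : Measure E} [μ.IsAddHaarMeasure]

lemma integral_abs_rpow_mul_abs_rpow_le (ha : 0 ≤ a) (hC₁ : 0 ≤ C₁)
    (hf : ∀ x, |f x| ≤ C₁ * groundProfile a ‖x‖) (hm : 0 ≤ m) (hmm : m < m') (z₁ z₂ : E) :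
    ∫ x, |f (x - z₁)| ^ m * |f (x - z₂)| ^ m' ∂μ
      ≤ C₁ ^ m * C₁ ^ m' * (∫ x, exp (-((m' - m) * ‖x‖)) ∂μ) * groundProfile a ‖z₁ - z₂‖ ^ m := by
  have hint : Integrable (fun x => exp (-((m' - m) * ‖x - z₂‖))) μ :=
    (integrable_exp_neg_mul_norm (sub_pos.mpr hmm)).comp_sub_right z₂
  calc ∫ x, |f (x - z₁)| ^ m * |f (x - z₂)| ^ m' ∂μ
      ≤ ∫ x, C₁ ^ m * C₁ ^ m' * groundProfile a ‖z₁ - z₂‖ ^ m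
          * exp (-((m' - m) * ‖x - z₂‖)) ∂μ :=
        integral_mono_of_nonneg (.of_forall fun x => by positivity) (hint.const_mul _)
          (.of_forall (abs_rpow_mul_abs_rpow_le ha hC₁ hf hm hmm.le · z₁ z₂))
    _ = _ := by
        rw [integral_const_mul, integral_sub_right_eq_self (fun x => exp (-((m' - m) * ‖x‖)))]
        ring

end Interaction

theorem statement16_general
    (d : ℕ) (hd : 1 ≤ d) (Q : Euc d → ℝ)
    (C₁ : ℝ) (hC₁ : 0 < C₁)
    (hdecay : ∀ x, |Q x| ≤ C₁ * (1 + ‖x‖) ^ (-(((d : ℝ) - 1) / 2)) * Real.exp (-‖x‖))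
    (m m' : ℝ) (hm : 0 < m) (hmm : m < m') :
    ∃ C > (0 : ℝ), ∀ z₁ z₂ : Euc d, 1 ≤ ‖z₁ - z₂‖ →
      (∫ x, |Q (x - z₁)| ^ m * |Q (x - z₂)| ^ m')
        ≤ C * (‖z₁ - z₂‖ ^ (-(((d : ℝ) - 1) / 2)) * Real.exp (-‖z₁ - z₂‖)) ^ m := by
  set a : ℝ := ((d : ℝ) - 1) / 2
  have ha : 0 ≤ a := div_nonneg (sub_nonneg.mpr (by exact_mod_cast hd)) zero_le_two
  have hQ : ∀ x, |Q x| ≤ C₁ * groundProfile a ‖x‖ := fun x =>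
    (hdecay x).trans_eq (mul_assoc _ _ _)
  set K : ℝ := ∫ x : Euc d, exp (-((m' - m) * ‖x‖))
  have hK : 0 ≤ K := integral_nonneg fun x => (exp_pos _).le
  refine ⟨C₁ ^ m * C₁ ^ m' * K + 1, by positivity, fun z₁ z₂ hz => ?_⟩
  calc (∫ x, |Q (x - z₁)| ^ m * |Q (x - z₂)| ^ m')
      ≤ C₁ ^ m * C₁ ^ m' * K * groundProfile a ‖z₁ - z₂‖ ^ m :=
        integral_abs_rpow_mul_abs_rpow_le ha hC₁.le hQ hm.le hmm z₁ z₂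
    _ ≤ (C₁ ^ m * C₁ ^ m' * K + 1) * (‖z₁ - z₂‖ ^ (-a) * exp (-‖z₁ - z₂‖)) ^ m := by
        exact mul_le_mul (by linarith) (rpow_le_rpow (groundProfile_pos (norm_nonneg _)).le
          (groundProfile_le_rpow_neg_mul_exp_neg ha (by linarith)) hm.le)
          (rpow_nonneg (groundProfile_pos (norm_nonneg _)).le _) (by positivity)

/-- Nonlinear interaction estimate (si2): for a function with the ground-state
decay rate and exponents `0 < m < m'`, the interaction integral is controlled by
the `m`-th power of the ground-state profile at the distance between the centers. -/
theorem statement16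
    (d : ℕ) (hd : 1 ≤ d) (Q : Euc d → ℝ) (hmeas : Measurable Q)
    (C₁ : ℝ) (hC₁ : 0 < C₁)
    (hdecay : ∀ x, |Q x| ≤ C₁ * (1 + ‖x‖) ^ (-(((d : ℝ) - 1) / 2)) * Real.exp (-‖x‖))
    (m m' : ℝ) (hm : 0 < m) (hmm : m < m') :
    ∃ C > (0 : ℝ), ∀ z₁ z₂ : Euc d, 1 ≤ ‖z₁ - z₂‖ →
      (∫ x, |Q (x - z₁)| ^ m * |Q (x - z₂)| ^ m')
        ≤ C * (‖z₁ - z₂‖ ^ (-(((d : ℝ) - 1) / 2)) * Real.exp (-‖z₁ - z₂‖)) ^ m :=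
  statement16_general d hd Q C₁ hC₁ hdecay m m' hm hmm
end
end

section
/- Let d ≥ 1, c > 0, C > 0, and let F : (0,∞) → ℝ be continuously differentiable with |F(r) − c r^{−(d−1)/2} e^{−r}| + |F'(r) + c r^{−(d−1)/2} e^{−r}| ≤ C r^{−(d+1)/2} e^{−r} for all r ≥ 1. Then there exist R₀ ≥ 1 and K ≥ 1 such that for all r, r' with R₀ ≤ r < r': K^{−1} F(r')(r' − r) ≤ F(r) − F(r') ≤ K F(r)(r' − r). -/
/-!
Write `G r = c r^{-(d-1)/2} e^{-r}`. Once `r ≥ 2C/c`, the error `C r^{-(d+1)/2} e^{-r}` is at most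
`G r / 2`, so both `F` and `-F'` lie between `G/2` and `3G/2`. Since `G` is decreasing, the mean
value theorem `F r - F r' = -F'(ξ) (r' - r)` with `r < ξ < r'` gives the two bounds with `K = 3`.
-/

open Real Set

noncomputable section

lemma antitoneOn_mul_rpow_neg_mul_exp_neg {a c : ℝ} (ha : 0 ≤ a) (hc : 0 ≤ c) :
    AntitoneOn (fun r => c * r ^ (-a) * exp (-r)) (Ioi 0) := by
  intro s (hs : 0 < s) t _ hst
  have : t ^ (-a) ≤ s ^ (-a) := rpow_le_rpow_of_nonpos hs hst (neg_nonpos.mpr ha)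
  dsimp only
  gcongr

lemma mul_rpow_neg_add_one_mul_exp_neg_le {a c C r : ℝ} (hc : 0 < c) (hr0 : 0 < r)
    (hr : 2 * C / c ≤ r) : C * r ^ (-(a + 1)) * exp (-r) ≤ c * r ^ (-a) * exp (-r) / 2 := by
  have hCr : C * r⁻¹ ≤ c / 2 := by
    have := (div_le_iff₀ hc).mp hr
    rw [mul_inv_le_iff₀ hr0]
    linarith
  rw [neg_add, rpow_add hr0, rpow_neg_one]
  have : 0 < r ^ (-a) * exp (-r) := by positivity
  calc C * (r ^ (-a) * r⁻¹) * exp (-r) = C * r⁻¹ * (r ^ (-a) * exp (-r)) := by ring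
    _ ≤ c / 2 * (r ^ (-a) * exp (-r)) := by gcongr
    _ = c * r ^ (-a) * exp (-r) / 2 := by ring

lemma sub_bounds_of_comparable_to_antitone {F G : ℝ → ℝ} {R r r' : ℝ}
    (hdiff : ∀ x, R ≤ x → DifferentiableAt ℝ F x) (hG : AntitoneOn G (Ici R))
    (hF : ∀ x, R ≤ x → |F x - G x| ≤ G x / 2)
    (hF' : ∀ x, R ≤ x → |deriv F x + G x| ≤ G x / 2) (hr : R ≤ r) (hrr' : r < r') :
    3⁻¹ * (F r' * (r' - r)) ≤ F r - F r' ∧ F r - F r' ≤ 3 * (F r * (r' - r)) := by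
  obtain ⟨ξ, ⟨hrξ, hξr'⟩, hξ⟩ := exists_deriv_eq_slope F hrr'
    (fun x hx => (hdiff x (hr.trans hx.1)).continuousAt.continuousWithinAt)
    (fun x hx => (hdiff x (hr.trans hx.1.le)).differentiableWithinAt)
  have hR : ∀ {x}, r ≤ x → x ∈ Ici R := fun h => hr.trans h
  have hmvt : F r - F r' = -deriv F ξ * (r' - r) := by
    rw [hξ, neg_mul, div_mul_cancel₀ _ (sub_pos.mpr hrr').ne', neg_sub]
  have hGξ : G ξ ≤ G r := hG (hR le_rfl) (hR hrξ.le) hrξ.le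
  have hGr' : G r' ≤ G ξ := hG (hR hrξ.le) (hR hrr'.le) hξr'.le
  have hFr := abs_le.mp (hF r hr)
  have hFr' := abs_le.mp (hF r' (hR hrr'.le))
  have hFξ := abs_le.mp (hF' ξ (hR hrξ.le))
  have hpos : 0 < r' - r := sub_pos.mpr hrr'
  rw [hmvt]
  constructor
  · calc 3⁻¹ * (F r' * (r' - r)) = F r' / 3 * (r' - r) := by ring
      _ ≤ -deriv F ξ * (r' - r) := by gcongr; linarith
  · calc -deriv F ξ * (r' - r) ≤ 3 * F r * (r' - r) := by gcongr; linarith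
      _ = 3 * (F r * (r' - r)) := by ring

theorem statement18_general
    (d : ℕ) (hd : 1 ≤ d) (c C : ℝ) (hc : 0 < c)
    (F : ℝ → ℝ) (hreg : ContDiffOn ℝ 1 F (Set.Ioi 0))
    (hasym : ∀ r : ℝ, 1 ≤ r →
      |F r - c * r ^ (-(((d : ℝ) - 1) / 2)) * Real.exp (-r)|
        + |deriv F r + c * r ^ (-(((d : ℝ) - 1) / 2)) * Real.exp (-r)|
        ≤ C * r ^ (-(((d : ℝ) + 1) / 2)) * Real.exp (-r)) :
    ∃ R₀ : ℝ, 1 ≤ R₀ ∧ ∃ K : ℝ, 1 ≤ K ∧ ∀ r r' : ℝ, R₀ ≤ r → r < r' →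
      K⁻¹ * (F r' * (r' - r)) ≤ F r - F r' ∧
      F r - F r' ≤ K * (F r * (r' - r)) := by
  set a : ℝ := ((d : ℝ) - 1) / 2
  have ha : 0 ≤ a := div_nonneg (sub_nonneg.mpr (by exact_mod_cast hd)) zero_le_two
  have hexp : ((d : ℝ) + 1) / 2 = a + 1 := by ring
  set R₀ := max 1 (2 * C / c)
  have hR₀ : ∀ {x}, R₀ ≤ x → 0 < x := fun h =>
    one_pos.trans_le ((le_max_left _ _).trans h)
  have hbounds : ∀ x, R₀ ≤ x →
      |F x - c * x ^ (-a) * exp (-x)| + |deriv F x + c * x ^ (-a) * exp (-x)|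
        ≤ c * x ^ (-a) * exp (-x) / 2 := fun x hx =>
    (hexp ▸ hasym x ((le_max_left _ _).trans hx)).trans
      (mul_rpow_neg_add_one_mul_exp_neg_le hc (hR₀ hx) ((le_max_right _ _).trans hx))
  refine ⟨R₀, le_max_left _ _, 3, by norm_num, fun r r' hr hrr' => ?_⟩
  refine sub_bounds_of_comparable_to_antitone
    (fun x hx => (hreg.differentiableOn one_ne_zero).differentiableAt
      (isOpen_Ioi.mem_nhds (hR₀ hx)))
    ((antitoneOn_mul_rpow_neg_mul_exp_neg ha hc.le).mono fun x hx => hR₀ hx)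
    (fun x hx => ?_) (fun x hx => ?_) hr hrr'
  · linarith [hbounds x hx, abs_nonneg (deriv F x + c * x ^ (-a) * exp (-x))]
  · linarith [hbounds x hx, abs_nonneg (F x - c * x ^ (-a) * exp (-x))]

/-- Two-sided estimate (Fesb) for the decrement of the interaction coefficient:
if `F(r) ≈ c r^{−(d−1)/2} e^{−r}` and `F'(r) ≈ −c r^{−(d−1)/2} e^{−r}` with
error `O(r^{−(d+1)/2} e^{−r})`, then for all large `r < r'`,
`F(r')(r'−r) ≲ F(r) − F(r') ≲ F(r)(r'−r)`. -/
theorem statement18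
    (d : ℕ) (hd : 1 ≤ d) (c C : ℝ) (hc : 0 < c) (hC : 0 < C)
    (F : ℝ → ℝ) (hreg : ContDiffOn ℝ 1 F (Set.Ioi 0))
    (hasym : ∀ r : ℝ, 1 ≤ r →
      |F r - c * r ^ (-(((d : ℝ) - 1) / 2)) * Real.exp (-r)|
        + |deriv F r + c * r ^ (-(((d : ℝ) - 1) / 2)) * Real.exp (-r)|
        ≤ C * r ^ (-(((d : ℝ) + 1) / 2)) * Real.exp (-r)) :
    ∃ R₀ : ℝ, 1 ≤ R₀ ∧ ∃ K : ℝ, 1 ≤ K ∧ ∀ r r' : ℝ, R₀ ≤ r → r < r' →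
      K⁻¹ * (F r' * (r' - r)) ≤ F r - F r' ∧
      F r - F r' ≤ K * (F r * (r' - r)) :=
  statement18_general d hd c C hc F hreg hasym

end
end
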